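/- For every integer p ≥ 0 and n = 4p + 1, there exists a planar decomposition of the Kronecker product K_{n,n,n} × K_2 into 2p + 1 planar subgraphs; in particular θ(K_{4p+1,4p+1,4p+1} × K_2) ≤ 2p + 1. -/

import Mathlib

open SimpleGraph

/-- The Kronecker (tensor/direct/categorical) product of two simple graphs:
`(g, h)` is adjacent to `(g', h')` iff `g g' ∈ E(G)` and `h h' ∈ E(H)`. -/
def SimpleGraph.tensorProd {α β : Type*} (G : SimpleGraph α) (H : SimpleGraph β) :
    SimpleGraph (α × β) where
  Adj x y := G.Adj x.1 y.1 ∧ H.Adj x.2 y.2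
  symm := ⟨fun _ _ h => ⟨h.1.symm, h.2.symm⟩⟩
  loopless := ⟨fun _ h => G.irrefl h.1⟩

/-- A simple graph is planar if it has a plane drawing: an injective placement of the
vertices in `ℝ²` together with, for each edge, a simple arc joining the images of its
endpoints, such that the interior of each arc avoids all vertex images and the interiors
of arcs of distinct edges are pairwise disjoint. -/
def SimpleGraph.IsPlanar {V : Type*} (G : SimpleGraph V) : Prop :=
  ∃ (pos : V → ℝ × ℝ) (arc : G.edgeSet → ℝ → ℝ × ℝ),
    Function.Injective pos ∧
    (∀ e : G.edgeSet, ContinuousOn (arc e) (Set.Icc 0 1) ∧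
      Set.InjOn (arc e) (Set.Icc 0 1) ∧
      ∃ u v : V, (e : Sym2 V) = s(u, v) ∧ arc e 0 = pos u ∧ arc e 1 = pos v) ∧
    (∀ e : G.edgeSet, ∀ x ∈ Set.Ioo (0:ℝ) 1, ∀ w : V, arc e x ≠ pos w) ∧
    (∀ e f : G.edgeSet, e ≠ f →
      ∀ x ∈ Set.Ioo (0:ℝ) 1, ∀ y ∈ Set.Ioo (0:ℝ) 1, arc e x ≠ arc f y)

/-- `G` has a decomposition into `t` planar subgraphs: `t` planar subgraphs of `G`
whose union is `G`. -/
def SimpleGraph.HasPlanarDecomposition {V : Type*} (G : SimpleGraph V) (t : ℕ) : Prop :=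
  ∃ f : Fin t → SimpleGraph V, (∀ i, f i ≤ G) ∧ (∀ i, (f i).IsPlanar) ∧ (⨆ i, f i) = G

/-- The thickness of a graph: the minimum number of planar subgraphs whose union is `G`. -/
noncomputable def SimpleGraph.thickness {V : Type*} (G : SimpleGraph V) : ℕ :=
  sInf {t | G.HasPlanarDecomposition t}

/-- The complete tripartite graph `K_{l,m,n}`. -/
def completeTripartiteGraph (l m n : ℕ) :
    SimpleGraph (Σ i : Fin 3, Fin (![l, m, n] i)) :=
  completeMultipartiteGraph fun i : Fin 3 => Fin (![l, m, n] i)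

/-!
`K₃ × K₂` is a 6-cycle, so `K_{n,n,n} × K₂` is the 6-cycle with every vertex blown up into `n`
independent vertices; each of its edges joins an even vertex (`K₂`-coordinate `0`) with
coordinate `x ∈ ℤ/n` to an odd vertex with coordinate `y`. Given an ordering of the coordinates
on each side, put a vertex on level `2·(its position) + (its side)`. Drawing the 6-cycle around
a circle and the levels as concentric circles, the edges between consecutive levels become
non-crossing spirals, so they form a planar subgraph.

For `n = 4p + 1`, the orders `x ↦ -(x + t + 1)` and `y ↦ t - y` of `ℤ/n` (`t < 2p`) put `x` and
`y` on consecutive levels whenever `y - x ∈ {2t + 1, 2t + 2}`, except for `(x, y) = (-(t+1), t+1)`.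
The remaining pairs (`x = y`, and `x = -k, y = k` for `1 ≤ k ≤ 2p`) are consecutive in the zigzag
order `0, 1, -1, 2, -2, …` taken on both sides, which gives the `(2p + 1)`-st planar piece.
-/

open Complex Real

lemma ZMod.natCast_injOn_Iio (n : ℕ) : Set.InjOn (Nat.cast : ℕ → ZMod n) (Set.Iio n) :=
  fun x hx y hy h => by rw [← ZMod.val_cast_of_lt hx, h, ZMod.val_cast_of_lt hy]

lemma ZMod.val_sub_one_add_one {n : ℕ} [NeZero n] {a : ZMod n} (ha : a ≠ 0) :
    (a - 1).val + 1 = a.val := by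
  have hpos : 0 < a.val := Nat.pos_of_ne_zero ((ZMod.val_ne_zero a).mpr ha)
  have hn : 1 < n := by
    by_contra! h
    obtain rfl : n = 1 := by have := NeZero.pos n; omega
    exact ha (Subsingleton.elim _ _)
  have h1 : (1 : ZMod n).val = 1 := by rw [ZMod.val_one_eq_one_mod, Nat.mod_eq_of_lt hn]
  rw [ZMod.val_sub (by omega), h1]
  omega

lemma Nat.eq_of_cast_add_eq_cast_add {r r' : ℕ} {σ σ' : ℝ} (hσ : σ ∈ Set.Ico (0 : ℝ) 1)
    (hσ' : σ' ∈ Set.Ico (0 : ℝ) 1) (h : (r : ℝ) + σ = r' + σ') : r = r' := by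
  have h₁ : r < r' + 1 := by exact_mod_cast (by linarith [hσ.1, hσ'.2] : (r : ℝ) < r' + 1)
  have h₂ : r' < r + 1 := by exact_mod_cast (by linarith [hσ.2, hσ'.1] : (r' : ℝ) < r + 1)
  omega

namespace HexCylinder

noncomputable def point (ρ a : ℝ) : ℝ × ℝ :=
  equivRealProdCLM (ρ * exp ((a * π / 3 : ℝ) * I))

lemma continuous_point {X : Type*} [TopologicalSpace X] {f g : X → ℝ}
    (hf : Continuous f) (hg : Continuous g) : Continuous fun x => point (f x) (g x) :=
  equivRealProdCLM.continuous.comp (by fun_prop)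

lemma eq_of_point_eq {ρ ρ' a a' : ℝ} (hρ : 0 < ρ) (hρ' : 0 < ρ')
    (h : point ρ a = point ρ' a') : ρ = ρ' ∧ ∃ k : ℤ, a = a' + 6 * k := by
  have hz := equivRealProdCLM.injective h
  obtain rfl : ρ = ρ' := by
    simpa only [norm_mul, norm_exp_ofReal_mul_I, norm_real, Real.norm_eq_abs, mul_one,
      abs_of_pos hρ, abs_of_pos hρ'] using congrArg norm hz
  obtain ⟨k, hk⟩ := exp_eq_exp_iff_exists_int.mp
    (mul_left_cancel₀ (ofReal_ne_zero.mpr hρ.ne') hz)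
  refine ⟨rfl, k, ?_⟩
  have hI : ((a * π / 3 - (a' * π / 3 + k * (2 * π)) : ℝ) : ℂ) * I = 0 := by
    push_cast at hk ⊢
    linear_combination hk
  have hre := ofReal_eq_zero.mp ((mul_eq_zero.mp hI).resolve_right I_ne_zero)
  nlinarith [pi_pos]

lemma point_congr (ρ : ℝ) {a b : ℤ} (h : a ≡ b [ZMOD 6]) : point ρ a = point ρ b := by
  obtain ⟨k, hk⟩ := h.dvd
  unfold point
  congr 2
  refine exp_eq_exp_iff_exists_int.mpr ⟨-k, ?_⟩
  rw [show a = b - 6 * k by omega]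
  push_cast
  ring

lemma eq_of_angle_eq {c c' : ℕ} {ε ε' k : ℤ} {σ : ℝ} (hc : c < 6) (hc' : c' < 6)
    (hpar : c % 2 = c' % 2) (hε : ε = 1 ∨ ε = -1) (hε' : ε' = 1 ∨ ε' = -1)
    (hσ : σ ∈ Set.Ioo (0 : ℝ) 1) (h : (c : ℝ) + ε * σ = c' + ε' * σ + 6 * k) :
    c = c' ∧ ε = ε' := by
  set m : ℤ := c' - c + 6 * k with hm
  have key : (m : ℝ) = (ε - ε') * σ := by rw [hm]; push_cast; linarith
  obtain ⟨hσ₀, hσ₁⟩ := hσ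
  rcases hε with rfl | rfl <;> rcases hε' with rfl | rfl <;> norm_num at key
  · have : m = 0 := by exact_mod_cast key
    omega
  · have : 0 < m ∧ m < 2 :=
      ⟨by exact_mod_cast (by linarith : (0 : ℝ) < m), by exact_mod_cast (by linarith : (m : ℝ) < 2)⟩
    omega
  · have : -2 < m ∧ m < 0 :=
      ⟨by exact_mod_cast (by linarith : (-2 : ℝ) < m), by exact_mod_cast (by linarith : (m : ℝ) < 0)⟩
    omega
  · have : m = 0 := by exact_mod_cast key
    omega

end HexCylinder

namespace SimpleGraph

open HexCylinder

section

variable {V : Type*} {G : SimpleGraph V} {cl rg : V → ℕ}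

lemma exists_hexOrientation
    (hadj : ∀ v w, G.Adj v w → (cl v + 1) % 6 = cl w ∨ (cl w + 1) % 6 = cl v)
    (hrg : ∀ v w, G.Adj v w → rg w = rg v + 1 ∨ rg v = rg w + 1) (e : G.edgeSet) :
    ∃ u w : V, ∃ ε : ℤ, (e : Sym2 V) = s(u, w) ∧ rg w = rg u + 1 ∧ (ε = 1 ∨ ε = -1) ∧
      cl u + ε ≡ cl w [ZMOD 6] := by
  have orient : ∀ u w, G.Adj u w → ∃ ε : ℤ, (ε = 1 ∨ ε = -1) ∧ cl u + ε ≡ cl w [ZMOD 6] := by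
    intro u w h
    rcases hadj u w h with h' | h'
    · exact ⟨1, Or.inl rfl, by unfold Int.ModEq; omega⟩
    · exact ⟨-1, Or.inr rfl, by unfold Int.ModEq; omega⟩
  obtain ⟨e, he⟩ := e
  induction e using Sym2.ind with
  | h a b =>
    rcases hrg a b he with h | h
    · obtain ⟨ε, hε, hc⟩ := orient a b he
      exact ⟨a, b, ε, rfl, h, hε, hc⟩
    · obtain ⟨ε, hε, hc⟩ := orient b a he.symm
      exact ⟨b, a, ε, Sym2.eq_swap, h, hε, hc⟩

/- Vertex `v` is drawn at radius `rg v + 1` and angle `cl v · π/3`; the edge from `u` up to `w`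
is the spiral of radius `rg u + 1 + σ` and angle `(cl u ± σ) · π/3`. Two spirals can only meet
over the same level at the same `σ`, and then, unless they are the same edge, only as the two
diagonals of a grid square, which start from classes of different parity: `hpar` rules this out. -/
theorem isPlanar_of_hexCylinder (hcl : ∀ v, cl v < 6) (hpar : ∀ v, rg v % 2 = cl v % 2)
    (hinj : ∀ v w, cl v = cl w → rg v = rg w → v = w)
    (hadj : ∀ v w, G.Adj v w → (cl v + 1) % 6 = cl w ∨ (cl w + 1) % 6 = cl v)
    (hrg : ∀ v w, G.Adj v w → rg w = rg v + 1 ∨ rg v = rg w + 1) : G.IsPlanar := by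
  choose u w ε he hrw hε hcw using exists_hexOrientation hadj hrg
  refine ⟨fun v => point (rg v + 1) (cl v),
    fun e σ => point (rg (u e) + 1 + σ) (cl (u e) + ε e * σ),
    ?injective, fun e => ⟨?continuous, ?injOn, u e, w e, he e, ?start, ?finish⟩,
    ?avoids_vertices, ?disjoint⟩
  case injective =>
    intro v v' h
    obtain ⟨hr, k, hk⟩ := eq_of_point_eq (by positivity) (by positivity) h
    have hc : (cl v : ℤ) = cl v' + 6 * k := by exact_mod_cast hk
    exact hinj v v' (by have := hcl v; have := hcl v'; omega)
      (by exact_mod_cast add_right_cancel hr)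
  case continuous => exact (continuous_point (by fun_prop) (by fun_prop)).continuousOn
  case injOn =>
    intro σ hσ σ' hσ' h
    exact add_left_cancel (eq_of_point_eq (by linarith [hσ.1]) (by linarith [hσ'.1]) h).1
  case start => simp only [add_zero, mul_zero]
  case finish =>
    have := point_congr ((rg (u e) : ℝ) + 1 + 1) (hcw e)
    push_cast at this
    simpa [hrw e, add_assoc] using this
  case avoids_vertices =>
    intro e σ hσ v h
    have hr := (eq_of_point_eq (by linarith [hσ.1]) (by positivity) h).1
    have := Nat.eq_of_cast_add_eq_cast_add ⟨hσ.1.le, hσ.2⟩ ⟨le_rfl, one_pos⟩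
      (by linarith : (rg (u e) : ℝ) + σ = rg v + 0)
    rw [this] at hr
    linarith [hσ.1]
  case disjoint =>
    intro e f hef σ hσ σ' hσ' h
    obtain ⟨hr, k, hk⟩ := eq_of_point_eq (by linarith [hσ.1]) (by linarith [hσ'.1]) h
    have hu : rg (u e) = rg (u f) :=
      Nat.eq_of_cast_add_eq_cast_add ⟨hσ.1.le, hσ.2⟩ ⟨hσ'.1.le, hσ'.2⟩ (by linarith)
    obtain rfl : σ = σ' := by rw [hu] at hr; linarith
    obtain ⟨hc, hεε⟩ := eq_of_angle_eq (hcl _) (hcl _) (by rw [← hpar, ← hpar, hu])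
      (hε e) (hε f) hσ hk
    have huu : u e = u f := hinj _ _ hc hu
    have hww : w e = w f := by
      refine hinj _ _ ?_ (by rw [hrw, hrw, huu])
      have := hcw e; have := hcw f; have := hcl (w e); have := hcl (w f)
      unfold Int.ModEq at *
      rw [huu, hεε] at *
      omega
    exact hef (Subtype.ext (by rw [he, he, huu, hww]))

end

abbrev tripartiteK2Vertex (n : ℕ) : Type := (Σ i : Fin 3, Fin (![n, n, n] i)) × Fin 2

abbrev tripartiteK2 (n : ℕ) : SimpleGraph (tripartiteK2Vertex n) :=
  (completeTripartiteGraph n n n).tensorProd ⊤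

namespace tripartiteK2

variable {n : ℕ}

-- `K₃ × K₂` is a 6-cycle, and `(i, s) ↦ 4i + 3s mod 6` numbers its vertices in cyclic order.
def hexClass (v : tripartiteK2Vertex n) : ℕ := (4 * v.1.1 + 3 * v.2) % 6

def coord (v : tripartiteK2Vertex n) : ℕ := v.1.2

lemma coord_lt (v : tripartiteK2Vertex n) : coord v < n := by
  obtain ⟨⟨i, x⟩, s⟩ := v
  fin_cases i <;> exact x.isLt

lemma hexClass_adj {v w : tripartiteK2Vertex n} (h : (tripartiteK2 n).Adj v w) :
    (hexClass v + 1) % 6 = hexClass w ∨ (hexClass w + 1) % 6 = hexClass v := by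
  obtain ⟨hi : v.1.1 ≠ w.1.1, hs : v.2 ≠ w.2⟩ := h
  have cyclic : ∀ (i j : Fin 3) (s r : Fin 2), i ≠ j → s ≠ r →
      ((4 * i.val + 3 * s.val) % 6 + 1) % 6 = (4 * j.val + 3 * r.val) % 6 ∨
        ((4 * j.val + 3 * r.val) % 6 + 1) % 6 = (4 * i.val + 3 * s.val) % 6 := by
    decide
  exact cyclic _ _ _ _ hi hs

lemma eq_of_hexClass_eq_of_coord_eq {v w : tripartiteK2Vertex n}
    (hc : hexClass v = hexClass w) (hx : coord v = coord w) : v = w := by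
  obtain ⟨⟨i, x⟩, s⟩ := v
  obtain ⟨⟨j, y⟩, r⟩ := w
  unfold hexClass at hc
  obtain rfl : i = j := by simp only at hc; omega
  obtain rfl : s = r := by simp only at hc; omega
  obtain rfl : x = y := Fin.ext hx
  rfl

def level (ord : Fin 2 → ℕ → ℕ) (v : tripartiteK2Vertex n) : ℕ :=
  2 * ord v.2 (coord v) + v.2

def piece (n : ℕ) (ord : Fin 2 → ℕ → ℕ) : SimpleGraph (tripartiteK2Vertex n) :=
  tripartiteK2 n ⊓ fromRel fun v w => level ord w = level ord v + 1

lemma isPlanar_piece {ord : Fin 2 → ℕ → ℕ} (hord : ∀ s, Set.InjOn (ord s) (Set.Iio n)) :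
    (piece n ord).IsPlanar := by
  refine isPlanar_of_hexCylinder (cl := hexClass) (rg := level ord)
    (fun v => Nat.mod_lt _ (by norm_num)) (fun v => ?_) (fun v w hc hr => ?_)
    (fun v w h => hexClass_adj h.1) (fun v w h => ?_)
  · unfold level hexClass
    omega
  · have hs : v.2 = w.2 := by unfold hexClass at hc; omega
    refine eq_of_hexClass_eq_of_coord_eq hc (hord v.2 (coord_lt v) (coord_lt w) ?_)
    unfold level at hr
    rw [hs] at hr ⊢
    omega
  · obtain ⟨-, -, h | h⟩ := h <;> omega

def ConsecutiveLevels (ord : Fin 2 → ℕ → ℕ) (x y : ℕ) : Prop :=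
  ord 1 y = ord 0 x ∨ ord 1 y + 1 = ord 0 x

lemma piece_adj {ord : Fin 2 → ℕ → ℕ} {v w : tripartiteK2Vertex n}
    (h : (tripartiteK2 n).Adj v w) (hv : v.2 = 0) (hw : w.2 = 1)
    (hlev : ConsecutiveLevels ord (coord v) (coord w)) : (piece n ord).Adj v w := by
  refine ⟨h, h.ne, ?_⟩
  simp only [level, hv, hw, Fin.val_zero, Fin.val_one]
  rcases hlev with hlev | hlev
  · exact Or.inl (by omega)
  · exact Or.inr (by omega)

theorem hasPlanarDecomposition_of_forall_consecutiveLevels {t : ℕ}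
    (ord : Fin t → Fin 2 → ℕ → ℕ) (hord : ∀ i s, Set.InjOn (ord i s) (Set.Iio n))
    (hcover : ∀ x < n, ∀ y < n, ∃ i, ConsecutiveLevels (ord i) x y) :
    (tripartiteK2 n).HasPlanarDecomposition t := by
  refine ⟨fun i => piece n (ord i), fun i => inf_le_left, fun i => isPlanar_piece (hord i),
    le_antisymm (iSup_le fun i => inf_le_left) fun v w h => iSup_adj.mpr ?_⟩
  have from_even : ∀ v w, (tripartiteK2 n).Adj v w → v.2 = 0 →
      ∃ i, (piece n (ord i)).Adj v w := by
    intro v w h hv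
    have hw : w.2 = 1 := by have : v.2 ≠ w.2 := h.2; omega
    obtain ⟨i, hi⟩ := hcover _ (coord_lt v) _ (coord_lt w)
    exact ⟨i, piece_adj h hv hw hi⟩
  by_cases hv : v.2 = 0
  · exact from_even v w h hv
  · obtain ⟨i, hi⟩ := from_even w v h.symm (by have : v.2 ≠ w.2 := h.2; omega)
    exact ⟨i, hi.symm⟩

def cyclicOrder (n t : ℕ) : Fin 2 → ℕ → ℕ :=
  ![fun x => (-(x + t + 1 : ZMod n)).val, fun y => ((t - y : ZMod n)).val]

-- The order `0, 1, -1, 2, -2, …, 2p, -2p` of `ℤ/(4p+1)`.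
def zigzag (p x : ℕ) : ℕ :=
  if x = 0 then 0 else if x ≤ 2 * p then 2 * x - 1 else 2 * (4 * p + 1 - x)

def pieceOrder (p t : ℕ) : Fin 2 → ℕ → ℕ :=
  if t < 2 * p then cyclicOrder (4 * p + 1) t else fun _ => zigzag p

lemma injOn_cyclicOrder [NeZero n] (t : ℕ) (s : Fin 2) :
    Set.InjOn (cyclicOrder n t s) (Set.Iio n) := by
  intro x hx y hy h
  refine ZMod.natCast_injOn_Iio n hx hy ?_
  fin_cases s
  · simpa using ZMod.val_injective n h
  · simpa using ZMod.val_injective n h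

lemma injOn_zigzag (p : ℕ) : Set.InjOn (zigzag p) (Set.Iio (4 * p + 1)) := by
  intro x hx y hy h
  simp only [Set.mem_Iio] at hx hy
  unfold zigzag at h
  split_ifs at h <;> omega

lemma injOn_pieceOrder (p t : ℕ) (s : Fin 2) :
    Set.InjOn (pieceOrder p t s) (Set.Iio (4 * p + 1)) := by
  unfold pieceOrder
  split_ifs
  · exact injOn_cyclicOrder t s
  · exact injOn_zigzag p

lemma consecutiveLevels_cyclicOrder_of_sub_eq_odd {t x y : ℕ}
    (h : (y - x : ZMod n) = 2 * t + 1) : ConsecutiveLevels (cyclicOrder n t) x y :=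
  Or.inl (congrArg ZMod.val (by linear_combination -h))

lemma consecutiveLevels_cyclicOrder_of_sub_eq_even [NeZero n] {t x y : ℕ}
    (h : (y - x : ZMod n) = 2 * t + 2) (hx : (x + t + 1 : ZMod n) ≠ 0) :
    ConsecutiveLevels (cyclicOrder n t) x y := by
  refine Or.inr ?_
  show ((t - y : ZMod n)).val + 1 = (-(x + t + 1 : ZMod n)).val
  rw [show (t - y : ZMod n) = -(x + t + 1) - 1 by linear_combination -h]
  exact ZMod.val_sub_one_add_one (neg_ne_zero.mpr hx)

lemma consecutiveLevels_zigzag_sub_self {p k : ℕ} (hk : 1 ≤ k) (hk' : k ≤ 2 * p) :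
    ConsecutiveLevels (fun _ => zigzag p) (4 * p + 1 - k) k := by
  refine Or.inr ?_
  simp only [zigzag]
  split_ifs <;> omega

lemma exists_consecutiveLevels_pieceOrder {p x y : ℕ} (hx : x < 4 * p + 1)
    (hy : y < 4 * p + 1) : ∃ t < 2 * p + 1, ConsecutiveLevels (pieceOrder p t) x y := by
  set d := (y - x : ZMod (4 * p + 1)).val
  have hdn : d < 4 * p + 1 := ZMod.val_lt _
  have hdiff : (y - x : ZMod (4 * p + 1)) = d := (ZMod.natCast_zmod_val _).symm
  have hcyc : ∀ t < 2 * p, pieceOrder p t = cyclicOrder (4 * p + 1) t := fun t ht => if_pos ht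
  have hzig : pieceOrder p (2 * p) = fun _ => zigzag p := if_neg (lt_irrefl _)
  obtain ⟨t, hodd | heven⟩ | hzero : (∃ t, d = 2 * t + 1 ∨ d = 2 * t + 2) ∨ d = 0 := by
    rcases Nat.eq_zero_or_pos d with h | h
    · exact Or.inr h
    · exact Or.inl ⟨(d - 1) / 2, by omega⟩
  · refine ⟨t, by omega, ?_⟩
    rw [hcyc t (by omega)]
    exact consecutiveLevels_cyclicOrder_of_sub_eq_odd (by rw [hdiff, hodd]; push_cast; ring)
  · have hsub : (y - x : ZMod (4 * p + 1)) = 2 * t + 2 := by rw [hdiff, heven]; push_cast; ring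
    by_cases hb : (x + t + 1 : ZMod (4 * p + 1)) = 0
    · have hx' : x = 4 * p + 1 - (t + 1) := by
        refine ZMod.natCast_injOn_Iio _ hx (by simp only [Set.mem_Iio]; omega) ?_
        rw [Nat.cast_sub (by omega), ZMod.natCast_self]
        push_cast
        linear_combination hb
      have hy' : y = t + 1 := by
        refine ZMod.natCast_injOn_Iio _ hy (by simp only [Set.mem_Iio]; omega) ?_
        push_cast
        linear_combination hsub + hb
      refine ⟨2 * p, by omega, ?_⟩
      rw [hzig, hx', hy']
      exact consecutiveLevels_zigzag_sub_self (by omega) (by omega)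
    · refine ⟨t, by omega, ?_⟩
      rw [hcyc t (by omega)]
      exact consecutiveLevels_cyclicOrder_of_sub_eq_even hsub hb
  · have hxy : x = y := by
      refine ZMod.natCast_injOn_Iio _ hx hy ?_
      rw [hzero, Nat.cast_zero] at hdiff
      linear_combination -hdiff
    refine ⟨2 * p, by omega, ?_⟩
    rw [hzig, hxy]
    exact Or.inl rfl

theorem hasPlanarDecomposition_of_four_mul_add_one (p : ℕ) :
    (tripartiteK2 (4 * p + 1)).HasPlanarDecomposition (2 * p + 1) := by
  refine hasPlanarDecomposition_of_forall_consecutiveLevels (fun t => pieceOrder p t)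
    (fun t => injOn_pieceOrder p t) fun x hx y hy => ?_
  obtain ⟨t, ht, hlev⟩ := exists_consecutiveLevels_pieceOrder hx hy
  exact ⟨⟨t, ht⟩, hlev⟩

end tripartiteK2

end SimpleGraph

/-- For `p ≥ 0` and `n = 4p + 1`, `K_{n,n,n} × K₂` has a planar decomposition
into `2p + 1` planar subgraphs; in particular `θ(K_{4p+1,4p+1,4p+1} × K₂) ≤ 2p + 1`. -/
theorem completeTripartite_tensorProd_K2_decomposition_of_4p1 (p : ℕ) :
    ((completeTripartiteGraph (4 * p + 1) (4 * p + 1) (4 * p + 1)).tensorProd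
        (⊤ : SimpleGraph (Fin 2))).HasPlanarDecomposition (2 * p + 1) ∧
    ((completeTripartiteGraph (4 * p + 1) (4 * p + 1) (4 * p + 1)).tensorProd
        (⊤ : SimpleGraph (Fin 2))).thickness ≤ 2 * p + 1 := by
  have h := SimpleGraph.tripartiteK2.hasPlanarDecomposition_of_four_mul_add_one p
  exact ⟨h, Nat.sInf_le h⟩
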